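/- Let a, b, c be real constants, p a positive even integer, and n a real number. On the open set U = { x ∈ ℝ³ : a x₁ᵖ + b x₂ᵖ + c x₃ᵖ > 0 } define λ(x) = (a x₁ᵖ + b x₂ᵖ + c x₃ᵖ)^{n/p}, and let M(x) be the 3×3 Jacobian matrix of x ↦ x/λ(x). Then the similarity invariants of M(x) (the coefficients of its characteristic polynomial γ³ − Mγ² + Gγ − A) are: Mean curvature M = trace M(x) = (3 − n)/λ(x); Gauss curvature G = (3 − 2n)/λ(x)²; Cubic curvature A = det M(x) = (1 − n)/λ(x)³. These curvature invariants are independent of the anisotropy coefficients a, b, c and of the exponent p. -/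

import Mathlib

/-!
Writing `∇λ` for the gradient, the Jacobian of `x ↦ x / λ(x)` is `λ⁻¹ (I - (∇λ / λ) xᵀ)`, and by
Euler's relation for the degree-`n` homogeneous function `λ` we have `⟨x, ∇λ⟩ = n λ`. So the
Jacobian is `λ⁻¹` times a rank-one perturbation of the identity with eigenvalues `1, 1, 1 - n`,
and the matrix determinant lemma gives its characteristic polynomial. Only Euler's relation
enters, which is why `a, b, c` and `p` drop out.
-/

open Matrix

namespace Matrix

variable {m R : Type*} [Fintype m] [DecidableEq m] [CommRing R]

theorem det_smul_one_add_vecMulVec (t : R) (u v : m → R) :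
    (t • (1 : Matrix m m R) + vecMulVec u v).det
      = t ^ Fintype.card m + (v ⬝ᵥ u) * t ^ (Fintype.card m - 1) := by
  have h := eval_charpoly (vecMulVec (-u) v) t
  rw [charpoly_vecMulVec] at h
  simp only [Polynomial.eval_sub, Polynomial.eval_pow, Polynomial.eval_X, Polynomial.eval_smul,
    smul_eq_mul, neg_dotProduct] at h
  rw [scalar_apply, ← smul_one_eq_diagonal, neg_vecMulVec, sub_neg_eq_add] at h
  rw [← h, dotProduct_comm]
  ring

theorem trace_smul_one_sub_vecMulVec (s : R) (u v : m → R) :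
    (s • (1 - vecMulVec u v)).trace = s * (Fintype.card m - v ⬝ᵥ u) := by
  rw [trace_smul, trace_sub, trace_one, trace_vecMulVec, dotProduct_comm, smul_eq_mul]

theorem det_smul_one_sub_vecMulVec (s : R) (u v : m → R) :
    (s • (1 - vecMulVec u v)).det = s ^ Fintype.card m * (1 - v ⬝ᵥ u) := by
  have h := det_smul_one_add_vecMulVec 1 (-u) v
  rw [one_smul, neg_vecMulVec, ← sub_eq_add_neg, one_pow, one_pow, dotProduct_neg] at h
  rw [det_smul, h]
  ring

theorem det_smul_one_sub_smul_one_sub_vecMulVec (γ s : R) (u v : m → R) :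
    (γ • (1 : Matrix m m R) - s • (1 - vecMulVec u v)).det
      = (γ - s) ^ Fintype.card m + s * (v ⬝ᵥ u) * (γ - s) ^ (Fintype.card m - 1) := by
  have h : γ • (1 : Matrix m m R) - s • (1 - vecMulVec u v)
      = (γ - s) • 1 + vecMulVec (s • u) v := by
    rw [smul_sub, smul_vecMulVec, sub_smul]
    abel
  rw [h, det_smul_one_add_vecMulVec, dotProduct_smul, smul_eq_mul]

end Matrix

section Calculus

variable {ι : Type*} [Fintype ι] [DecidableEq ι]

theorem fderiv_apply_div_apply {f : (ι → ℝ) → ℝ} {x : ι → ℝ}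
    (hf : DifferentiableAt ℝ f x) (hfx : f x ≠ 0) (i j : ι) :
    fderiv ℝ (fun y => y j / f y) x (Pi.single i 1)
      = (Pi.single i 1 : ι → ℝ) j / f x - x j * fderiv ℝ f x (Pi.single i 1) / f x ^ 2 := by
  have h : HasFDerivAt (fun y : ι → ℝ => y j * (f y)⁻¹) _ x :=
    (hasFDerivAt_apply j x).mul ((hasDerivAt_inv hfx).comp_hasFDerivAt x hf.hasFDerivAt)
  simp only [← div_eq_mul_inv] at h
  rw [h.fderiv]
  simp only [neg_smul, smul_neg, _root_.add_apply, _root_.neg_apply,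
    _root_.smul_apply, smul_eq_mul, ContinuousLinearMap.proj_apply]
  field_simp
  ring

theorem jacobian_div_self_eq {f : (ι → ℝ) → ℝ} {x : ι → ℝ}
    (hf : DifferentiableAt ℝ f x) (hfx : f x ≠ 0) :
    Matrix.of (fun i j => fderiv ℝ (fun y => y j / f y) x (Pi.single i 1))
      = (f x)⁻¹ • (1 - vecMulVec ((f x)⁻¹ • fun i => fderiv ℝ f x (Pi.single i 1)) x) := by
  ext i j
  rw [of_apply, fderiv_apply_div_apply hf hfx, Matrix.smul_apply, Matrix.sub_apply,
    one_eq_pi_single, vecMulVec_apply, Pi.smul_apply, smul_eq_mul, smul_eq_mul]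
  field_simp

theorem dotProduct_fderiv_single {f : (ι → ℝ) → ℝ} (x : ι → ℝ) :
    x ⬝ᵥ (fun i => fderiv ℝ f x (Pi.single i 1)) = fderiv ℝ f x x := by
  conv_rhs => arg 2; rw [pi_eq_sum_univ' x]
  simp [dotProduct, map_sum, map_smul]

end Calculus

theorem fderiv_apply_self_of_homogeneous {E : Type*} [NormedAddCommGroup E] [NormedSpace ℝ E]
    {f : E → ℝ} {x : E} {n : ℝ} (hf : DifferentiableAt ℝ f x)
    (hhom : ∀ t : ℝ, 0 < t → f (t • x) = t ^ n * f x) :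
    fderiv ℝ f x x = n * f x := by
  have hray : HasDerivAt (fun t : ℝ => f (t • x)) (fderiv ℝ f x x) 1 := by
    have h := (hasDerivAt_id (1 : ℝ)).smul_const x
    simp only [id, one_smul] at h
    exact hf.hasFDerivAt.comp_hasDerivAt_of_eq (1 : ℝ) h (one_smul ℝ x).symm
  have hpow : HasDerivAt (fun t : ℝ => t ^ n * f x) (n * f x) 1 := by
    simpa using (Real.hasDerivAt_rpow_const (x := 1) (p := n) (Or.inl one_ne_zero)).mul_const (f x)
  have heq : (fun t : ℝ => f (t • x)) =ᶠ[nhds 1] fun t => t ^ n * f x :=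
    Filter.eventually_of_mem (Ioi_mem_nhds one_pos) hhom
  exact hray.unique (hpow.congr_of_eventuallyEq heq)

theorem rpow_div_homogeneous {E : Type*} [AddCommGroup E] [Module ℝ E] {g : E → ℝ} {x : E}
    {d : ℝ} (hd : d ≠ 0) (hgx : 0 ≤ g x) (hg : ∀ t : ℝ, 0 < t → g (t • x) = t ^ d * g x)
    (n : ℝ) (t : ℝ) (ht : 0 < t) :
    g (t • x) ^ (n / d) = t ^ n * g x ^ (n / d) := by
  rw [hg t ht, Real.mul_rpow (Real.rpow_nonneg ht.le d) hgx, ← Real.rpow_mul ht.le,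
    mul_div_cancel₀ n hd]

def holderBase (a b c : ℝ) (p : ℕ) (x : Fin 3 → ℝ) : ℝ :=
  a * x 0 ^ p + b * x 1 ^ p + c * x 2 ^ p

theorem holderBase_smul (a b c : ℝ) (p : ℕ) (t : ℝ) (x : Fin 3 → ℝ) :
    holderBase a b c p (t • x) = t ^ (p : ℝ) * holderBase a b c p x := by
  simp only [holderBase, Pi.smul_apply, smul_eq_mul, mul_pow, Real.rpow_natCast]
  ring

theorem differentiable_holderBase (a b c : ℝ) (p : ℕ) : Differentiable ℝ (holderBase a b c p) := by
  unfold holderBase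
  fun_prop

theorem holder_jacobian_invariants_3D_general (a b c : ℝ)
    (p : ℕ) (hp : 0 < p) (n : ℝ)
    (lam : (Fin 3 → ℝ) → ℝ)
    (hlam : ∀ x : Fin 3 → ℝ,
      lam x = (a * x 0 ^ p + b * x 1 ^ p + c * x 2 ^ p) ^ (n / (p : ℝ)))
    (M : (Fin 3 → ℝ) → Matrix (Fin 3) (Fin 3) ℝ)
    (hM : ∀ x i j, M x i j = fderiv ℝ (fun y => y j / lam y) x (Pi.single i 1)) :
    ∀ x : Fin 3 → ℝ, 0 < a * x 0 ^ p + b * x 1 ^ p + c * x 2 ^ p →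
      (M x).trace = (3 - n) / lam x ∧
      (M x).det = (1 - n) / lam x ^ 3 ∧
      (∀ γ : ℝ,
        (γ • (1 : Matrix (Fin 3) (Fin 3) ℝ) - M x).det =
          γ ^ 3 - ((3 - n) / lam x) * γ ^ 2 + ((3 - 2 * n) / lam x ^ 2) * γ
            - (1 - n) / lam x ^ 3) := by
  intro x hx
  have hlam_eq : lam = fun y => holderBase a b c p y ^ (n / p) := funext hlam
  have hdiff : DifferentiableAt ℝ lam x := by
    rw [hlam_eq]
    exact ((differentiable_holderBase a b c p) x).rpow_const (Or.inl hx.ne')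
  have hpos : 0 < lam x := hlam x ▸ Real.rpow_pos_of_pos hx _
  have heuler : fderiv ℝ lam x x = n * lam x := by
    refine fderiv_apply_self_of_homogeneous hdiff fun t ht => ?_
    simp only [hlam_eq]
    exact rpow_div_homogeneous (g := holderBase a b c p) (Nat.cast_ne_zero.mpr hp.ne') hx.le
      (fun t _ => holderBase_smul a b c p t x) n t ht
  set u : Fin 3 → ℝ := (lam x)⁻¹ • fun i => fderiv ℝ lam x (Pi.single i 1)
  have hMx : M x = (lam x)⁻¹ • (1 - vecMulVec u x) := by
    rw [← jacobian_div_self_eq hdiff hpos.ne']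
    ext i j
    exact hM x i j
  have hxu : x ⬝ᵥ u = n := by
    rw [dotProduct_smul, dotProduct_fderiv_single, heuler, smul_eq_mul]
    field_simp
  rw [hMx, trace_smul_one_sub_vecMulVec, det_smul_one_sub_vecMulVec, hxu, Fintype.card_fin]
  refine ⟨?_, ?_, fun γ => ?_⟩
  · simp only [div_eq_mul_inv]; ring
  · simp only [div_eq_mul_inv]; ring
  · rw [det_smul_one_sub_smul_one_sub_vecMulVec, hxu, Fintype.card_fin]
    simp only [div_eq_mul_inv]
    ring

/-- For the 3D Hölder norm `λ(x) = (a x₁ᵖ + b x₂ᵖ + c x₃ᵖ)^{n/p}` and the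
Jacobian matrix `M(x)` of `x ↦ x/λ(x)`, the similarity invariants (coefficients of the
characteristic polynomial `γ³ − Mγ² + Gγ − A`) are: Mean curvature
`M = trace M(x) = (3−n)/λ`, Gauss curvature `G = (3−2n)/λ²`, Cubic curvature
`A = det M(x) = (1−n)/λ³`; they are independent of the anisotropy coefficients
`a, b, c` and the exponent `p`. -/
theorem holder_jacobian_invariants_3D (a b c : ℝ)
    (p : ℕ) (hp : 0 < p) (hpe : Even p) (n : ℝ)
    (lam : (Fin 3 → ℝ) → ℝ)
    (hlam : ∀ x : Fin 3 → ℝ,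
      lam x = (a * x 0 ^ p + b * x 1 ^ p + c * x 2 ^ p) ^ (n / (p : ℝ)))
    (M : (Fin 3 → ℝ) → Matrix (Fin 3) (Fin 3) ℝ)
    (hM : ∀ x i j, M x i j = fderiv ℝ (fun y => y j / lam y) x (Pi.single i 1)) :
    ∀ x : Fin 3 → ℝ, 0 < a * x 0 ^ p + b * x 1 ^ p + c * x 2 ^ p →
      (M x).trace = (3 - n) / lam x ∧
      (M x).det = (1 - n) / lam x ^ 3 ∧
      (∀ γ : ℝ,
        (γ • (1 : Matrix (Fin 3) (Fin 3) ℝ) - M x).det =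
          γ ^ 3 - ((3 - n) / lam x) * γ ^ 2 + ((3 - 2 * n) / lam x ^ 2) * γ
            - (1 - n) / lam x ^ 3) :=
  holder_jacobian_invariants_3D_general a b c p hp n lam hlam M hM
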